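/- arXiv:1607.07110 — 2 statements merged into one kernel-verified Lean document; each statement's English description precedes it below -/
import Mathlib

section
/- For every q in the closed ball B_d(0, η*) one has ‖J(q)U(q) − J(0)U(0)‖ ≤ 4√d·‖q‖_d, where ‖·‖ denotes the ℓ²-operator norm of the d×d matrix J(q)U(q). -/
/-! Split `J(q)U(q) − J(0)U(0) = (J(q) − J(0))U(q) + J(0)(U(q) − U(0))`. On the ball of radius
`η* = min(δ*, 1/(2κ))` one has `‖J(q) − J(0)‖ ≤ κ‖q‖ ≤ 1/2`, so `‖J‖ ≤ 3/2` and `u` is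
`3/2`-Lipschitz there. Hence every column of `U(q)` has norm at most `3η*`, and every column of
`U(q) − U(0)` equals `u(q) − u(0)`, of norm at most `(3/2)‖q‖`. A matrix with `d` columns of norm
at most `M` has operator norm at most `√d M`, and `κη* ≤ 1/2`, so each of the two terms is at most
`(3/2)√d‖q‖`. -/

open Metric

/-- The continuous linear map `ℝ^D → ℝ^d` given by the `d × D` matrix `[I_d | 0_{d,D-d}]`. -/
noncomputable def projCLM (d D : ℕ) (h : d ≤ D) :
    EuclideanSpace ℝ (Fin D) →L[ℝ] EuclideanSpace ℝ (Fin d) :=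
  LinearMap.toContinuousLinearMap
    { toFun := fun x => WithLp.toLp 2 (fun i => x (Fin.castLE h i))
      map_add' := fun _ _ => rfl
      map_smul' := fun _ _ => rfl }

/-- The `D × d` matrix `U(q)` whose `j`-th column is `u(q) − x_j* = u(q) − u(q_j)`,
viewed as a continuous linear map `ℝ^d → ℝ^D`. -/
noncomputable def Umap {d D : ℕ}
    (u : EuclideanSpace ℝ (Fin d) → EuclideanSpace ℝ (Fin D))
    (qs : Fin d → EuclideanSpace ℝ (Fin d)) (q : EuclideanSpace ℝ (Fin d)) :
    EuclideanSpace ℝ (Fin d) →L[ℝ] EuclideanSpace ℝ (Fin D) :=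
  LinearMap.toContinuousLinearMap
    { toFun := fun y => ∑ ℓ : Fin d, y ℓ • (u q - u (qs ℓ))
      map_add' := by
        intro y z
        simp [PiLp.add_apply, add_smul, Finset.sum_add_distrib]
      map_smul' := by
        intro c y
        simp [PiLp.smul_apply, smul_smul, Finset.smul_sum] }

lemma sum_abs_le_sqrt_card_mul_norm {ι : Type*} [Fintype ι] (y : EuclideanSpace ℝ ι) :
    ∑ i, |y i| ≤ √(Fintype.card ι) * ‖y‖ := by
  rw [EuclideanSpace.norm_eq, ← Real.sqrt_mul (Nat.cast_nonneg _)]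
  apply Real.le_sqrt_of_sq_le
  simpa only [Real.norm_eq_abs, sq_abs, Finset.card_univ] using
    sq_sum_le_card_mul_sum_sq (s := Finset.univ) (f := fun i => |y i|)

lemma ContinuousLinearMap.opNorm_le_sqrt_card_mul_of_norm_apply_single_le
    {ι E : Type*} [Fintype ι] [DecidableEq ι] [SeminormedAddCommGroup E] [NormedSpace ℝ E]
    (T : EuclideanSpace ℝ ι →L[ℝ] E) {M : ℝ} (hM : 0 ≤ M)
    (hT : ∀ i, ‖T (EuclideanSpace.single i 1)‖ ≤ M) :
    ‖T‖ ≤ √(Fintype.card ι) * M := by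
  refine T.opNorm_le_bound (by positivity) fun y => ?_
  have hy : y = ∑ i, y i • EuclideanSpace.single i (1 : ℝ) := by
    simpa using ((EuclideanSpace.basisFun ι ℝ).sum_repr y).symm
  calc ‖T y‖ = ‖∑ i, y i • T (EuclideanSpace.single i 1)‖ := by
        conv_lhs => rw [hy]
        simp only [map_sum, map_smul]
    _ ≤ ∑ i, |y i| * M := by
        refine (norm_sum_le _ _).trans (Finset.sum_le_sum fun i _ => ?_)
        rw [norm_smul, Real.norm_eq_abs]
        gcongr
        exact hT i
    _ = (∑ i, |y i|) * M := (Finset.sum_mul ..).symm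
    _ ≤ √(Fintype.card ι) * ‖y‖ * M := by gcongr; exact sum_abs_le_sqrt_card_mul_norm y
    _ = √(Fintype.card ι) * M * ‖y‖ := by ring

lemma ContinuousLinearMap.norm_comp_sub_comp_le {E F G : Type*} [SeminormedAddCommGroup E]
    [SeminormedAddCommGroup F] [SeminormedAddCommGroup G] [NormedSpace ℝ E] [NormedSpace ℝ F]
    [NormedSpace ℝ G] (f f' : F →L[ℝ] G) (g g' : E →L[ℝ] F) :
    ‖f'.comp g' - f.comp g‖ ≤ ‖f' - f‖ * ‖g'‖ + ‖f‖ * ‖g' - g‖ := by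
  have : f'.comp g' - f.comp g = (f' - f).comp g' + f.comp (g' - g) := by
    rw [ContinuousLinearMap.sub_comp, ContinuousLinearMap.comp_sub]; abel
  rw [this]
  exact (norm_add_le _ _).trans (add_le_add (opNorm_comp_le _ _) (opNorm_comp_le _ _))

lemma norm_projCLM_le (d D : ℕ) (h : d ≤ D) : ‖projCLM d D h‖ ≤ 1 := by
  refine (projCLM d D h).opNorm_le_bound zero_le_one fun x => ?_
  rw [one_mul, EuclideanSpace.norm_eq, EuclideanSpace.norm_eq]
  apply Real.sqrt_le_sqrt
  calc ∑ i : Fin d, ‖x (Fin.castLE h i)‖ ^ 2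
      = ∑ j ∈ Finset.univ.map (Fin.castLEEmb h), ‖x j‖ ^ 2 := by rw [Finset.sum_map]; rfl
    _ ≤ ∑ j, ‖x j‖ ^ 2 :=
        Finset.sum_le_sum_of_subset_of_nonneg (Finset.subset_univ _) fun _ _ _ => by positivity

lemma mul_le_half_of_le_one_div_two_mul {κ r : ℝ} (hr : 0 ≤ r) (h : r ≤ 1 / (2 * κ)) :
    κ * r ≤ 1 / 2 := by
  rcases le_or_gt κ 0 with hκ | hκ
  · nlinarith
  · rw [le_div_iff₀ (by positivity)] at h
    linarith

section Umap

variable {d D : ℕ} (u : EuclideanSpace ℝ (Fin d) → EuclideanSpace ℝ (Fin D))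
  (qs : Fin d → EuclideanSpace ℝ (Fin d))

lemma Umap_apply_single (q : EuclideanSpace ℝ (Fin d)) (ℓ : Fin d) :
    Umap u qs q (EuclideanSpace.single ℓ 1) = u q - u (qs ℓ) := by
  simp [Umap]

lemma norm_Umap_le {q : EuclideanSpace ℝ (Fin d)} {M : ℝ} (hM : 0 ≤ M)
    (h : ∀ ℓ, ‖u q - u (qs ℓ)‖ ≤ M) : ‖Umap u qs q‖ ≤ √d * M := by
  simpa using (Umap u qs q).opNorm_le_sqrt_card_mul_of_norm_apply_single_le hM
    fun ℓ => (Umap_apply_single u qs q ℓ).symm ▸ h ℓ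

lemma norm_Umap_sub_le (p q : EuclideanSpace ℝ (Fin d)) :
    ‖Umap u qs q - Umap u qs p‖ ≤ √d * ‖u q - u p‖ := by
  simpa using (Umap u qs q - Umap u qs p).opNorm_le_sqrt_card_mul_of_norm_apply_single_le
    (norm_nonneg _) fun ℓ => by
      rw [sub_apply, Umap_apply_single, Umap_apply_single,
        sub_sub_sub_cancel_right]

end Umap

theorem statement3_general (d D : ℕ) (hdD : d ≤ D)
    (u : EuclideanSpace ℝ (Fin d) → EuclideanSpace ℝ (Fin D))
    (δ κ : ℝ)
    (J : EuclideanSpace ℝ (Fin d) → (EuclideanSpace ℝ (Fin D) →L[ℝ] EuclideanSpace ℝ (Fin d)))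
    (hu : ∀ q ∈ closedBall (0 : EuclideanSpace ℝ (Fin d)) δ,
      HasFDerivWithinAt u (ContinuousLinearMap.adjoint (J q)) (closedBall 0 δ) q)
    (hJ0 : J 0 = projCLM d D hdD)
    (hJlip : ∀ q ∈ closedBall (0 : EuclideanSpace ℝ (Fin d)) δ, ‖J q - J 0‖ ≤ κ * ‖q‖)
    (qs : Fin d → EuclideanSpace ℝ (Fin d))
    (hqs : ∀ ℓ, qs ℓ ∈ closedBall (0 : EuclideanSpace ℝ (Fin d)) (min δ (1 / (2 * κ)))) :
    ∀ q ∈ closedBall (0 : EuclideanSpace ℝ (Fin d)) (min δ (1 / (2 * κ))),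
      ‖(J q).comp (Umap u qs q) - (J 0).comp (Umap u qs 0)‖ ≤ 4 * Real.sqrt d * ‖q‖ := by
  intro q hq
  set η := min δ (1 / (2 * κ))
  have hη : 0 ≤ η := nonneg_of_mem_closedBall hq
  have hηδ : closedBall (0 : EuclideanSpace ℝ (Fin d)) η ⊆ closedBall 0 δ := closedBall_subset_closedBall (min_le_left _ _)
  have hJ0_le : ‖J 0‖ ≤ 1 := hJ0 ▸ norm_projCLM_le d D hdD
  have hJ_le : ∀ p ∈ closedBall 0 η, ‖J p‖ ≤ 3 / 2 := fun p hp => by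
    have hp' := mem_closedBall_zero_iff.1 hp
    have := mul_le_half_of_le_one_div_two_mul (norm_nonneg p) (hp'.trans (min_le_right _ _))
    linarith [norm_le_norm_add_norm_sub' (J p) (J 0), hJlip p (hηδ hp)]
  have hu_lip : ∀ p ∈ closedBall 0 η, ∀ p' ∈ closedBall 0 η, ‖u p - u p'‖ ≤ 3 / 2 * ‖p - p'‖ :=
    fun p hp p' hp' => (convex_closedBall 0 η).norm_image_sub_le_of_norm_hasFDerivWithin_le
      (fun x hx => (hu x (hηδ hx)).mono hηδ)
      (fun x hx => (LinearIsometryEquiv.norm_map _ _).trans_le (hJ_le x hx)) hp' hp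
  have hUq : ‖Umap u qs q‖ ≤ √d * (3 * η) := norm_Umap_le u qs (by positivity) fun ℓ => by
    have := norm_sub_le_of_le (mem_closedBall_zero_iff.1 hq) (mem_closedBall_zero_iff.1 (hqs ℓ))
    linarith [hu_lip q hq (qs ℓ) (hqs ℓ)]
  have hUsub : ‖Umap u qs q - Umap u qs 0‖ ≤ √d * (3 / 2 * ‖q‖) :=
    (norm_Umap_sub_le u qs 0 q).trans <| by
      gcongr; simpa using hu_lip q hq 0 (mem_closedBall_self hη)
  have hκq : 0 ≤ κ * ‖q‖ := (norm_nonneg _).trans (hJlip q (hηδ hq))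
  have hκη : κ * η ≤ 1 / 2 := mul_le_half_of_le_one_div_two_mul hη (min_le_right _ _)
  calc _ ≤ ‖J q - J 0‖ * ‖Umap u qs q‖ + ‖J 0‖ * ‖Umap u qs q - Umap u qs 0‖ :=
        ContinuousLinearMap.norm_comp_sub_comp_le _ _ _ _
    _ ≤ κ * ‖q‖ * (√d * (3 * η)) + 1 * (√d * (3 / 2 * ‖q‖)) := by
        gcongr
        exact hJlip q (hηδ hq)
    _ ≤ 4 * √d * ‖q‖ := by
        nlinarith [mul_nonneg (Real.sqrt_nonneg d) (norm_nonneg q)]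

/-- for every `q ∈ B_d(0, η*)`,
`‖J(q)U(q) − J(0)U(0)‖ ≤ 4√d · ‖q‖_d` (ℓ²-operator norm of the `d × d` matrix). -/
theorem statement3 (d D : ℕ) (hd : 1 ≤ d) (hdD : d ≤ D)
    (u : EuclideanSpace ℝ (Fin d) → EuclideanSpace ℝ (Fin D))
    (δ κ : ℝ) (hδ : 0 < δ) (hκ : 0 < κ)
    (J : EuclideanSpace ℝ (Fin d) → (EuclideanSpace ℝ (Fin D) →L[ℝ] EuclideanSpace ℝ (Fin d)))
    (hu : ∀ q ∈ closedBall (0 : EuclideanSpace ℝ (Fin d)) δ,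
      HasFDerivWithinAt u (ContinuousLinearMap.adjoint (J q)) (closedBall 0 δ) q)
    (hJcont : ContinuousOn J (closedBall 0 δ))
    (hJ0 : J 0 = projCLM d D hdD)
    (hJlip : ∀ q ∈ closedBall (0 : EuclideanSpace ℝ (Fin d)) δ, ‖J q - J 0‖ ≤ κ * ‖q‖)
    (qs : Fin d → EuclideanSpace ℝ (Fin d))
    (hqs : ∀ ℓ, qs ℓ ∈ closedBall (0 : EuclideanSpace ℝ (Fin d)) (min δ (1 / (2 * κ)))) :
    ∀ q ∈ closedBall (0 : EuclideanSpace ℝ (Fin d)) (min δ (1 / (2 * κ))),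
      ‖(J q).comp (Umap u qs q) - (J 0).comp (Umap u qs 0)‖ ≤ 4 * Real.sqrt d * ‖q‖ :=
  statement3_general d D hdD u δ κ J hu hJ0 hJlip qs hqs
end

section
/- The map Ψ is injective on the closed ball B_d(0, 2β*), and for all p, q ∈ B_d(0, 2β*) one has γ·‖q − p‖_d ≤ ‖Ψ(q) − Ψ(p)‖_d ≤ 16√d·η*·‖q − p‖_d. -/
open Metric

/-- The map `Ψ(q) = (‖u(q) − u(q_1)‖², …, ‖u(q) − u(q_d)‖²) ∈ ℝ^d`. -/
noncomputable def PsiMap {d D : ℕ}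
    (u : EuclideanSpace ℝ (Fin d) → EuclideanSpace ℝ (Fin D))
    (qs : Fin d → EuclideanSpace ℝ (Fin d)) (q : EuclideanSpace ℝ (Fin d)) :
    EuclideanSpace ℝ (Fin d) :=
  WithLp.toLp 2 (fun ℓ => ‖u q - u (qs ℓ)‖ ^ 2)

/-!
Write `w = u q - u p`. The `ℓ`-th coordinate of `Ψ q - Ψ p` is `⟪w, (u q - u qₗ) + (u p - u qₗ)⟫`,
which gives the upper bound once `u` is `3/2`-Lipschitz on `B(0, η*)`: by the mean value
inequality, since `J(0)ᵀ` is an isometry and `κ η* ≤ 1/2`. For the lower bound split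
`Ψ q - Ψ p = 2 U(0)ᵀ w + ⟪w, u q + u p - 2 u 0⟫ (1, …, 1)`. Up to an error `κ r ‖q - p‖`,
`w = J(0)ᵀ (q - p)`, and `U(0)ᵀ J(0)ᵀ = (J(0) U(0))ᵀ` is bounded below by `γ` because the square
matrix `J(0) U(0)` is. With `r = 2β*` all error terms add up to at most `(3/4) γ ‖q - p‖`.
-/

open ContinuousLinearMap
open scoped RealInnerProductSpace

theorem EuclideanSpace.norm_le_sqrt_card_mul {ι : Type*} [Fintype ι] (x : EuclideanSpace ℝ ι)
    {C : ℝ} (hC : 0 ≤ C) (h : ∀ i, |x i| ≤ C) : ‖x‖ ≤ √(Fintype.card ι) * C := by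
  rw [EuclideanSpace.norm_eq, ← Real.sqrt_sq hC, ← Real.sqrt_mul (Nat.cast_nonneg _)]
  gcongr
  calc ∑ i, ‖x i‖ ^ 2 ≤ ∑ _i : ι, C ^ 2 := by
        gcongr with i
        exact h i
    _ = _ := by simp

theorem real_inner_sub_add_eq_norm_sq_sub_norm_sq {F : Type*} [NormedAddCommGroup F]
    [InnerProductSpace ℝ F] (a b : F) : ⟪a - b, a + b⟫ = ‖a‖ ^ 2 - ‖b‖ ^ 2 := by
  rw [inner_sub_left, inner_add_right, inner_add_right, real_inner_self_eq_norm_sq,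
    real_inner_self_eq_norm_sq, real_inner_comm a b]
  ring

theorem ContinuousLinearMap.le_norm_apply_of_forall_norm_eq_one {E F : Type*}
    [NormedAddCommGroup E] [NormedSpace ℝ E] [NormedAddCommGroup F] [NormedSpace ℝ F]
    (T : E →L[ℝ] F) {γ : ℝ} (h : ∀ y, ‖y‖ = 1 → γ ≤ ‖T y‖) (y : E) : γ * ‖y‖ ≤ ‖T y‖ := by
  rcases eq_or_ne y 0 with rfl | hy
  · simp
  have hy' : 0 < ‖y‖ := norm_pos_iff.mpr hy
  have := h (‖y‖⁻¹ • y) (by rw [norm_smul, norm_inv, norm_norm, inv_mul_cancel₀ hy'.ne'])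
  rw [map_smul, norm_smul, norm_inv, norm_norm, inv_mul_eq_div, le_div_iff₀ hy'] at this
  linarith

/-- `T` is onto, and for `v = T y` one has `‖v‖² = ⟪y, T† v⟫ ≤ ‖v‖ ‖T† v‖ / γ`. -/
theorem ContinuousLinearMap.le_norm_adjoint_apply {E : Type*} [NormedAddCommGroup E]
    [InnerProductSpace ℝ E] [FiniteDimensional ℝ E] (T : E →L[ℝ] E) {γ : ℝ} (hγ : 0 < γ)
    (h : ∀ y, γ * ‖y‖ ≤ ‖T y‖) (v : E) : γ * ‖v‖ ≤ ‖adjoint T v‖ := by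
  have hinj : Function.Injective T := by
    refine (injective_iff_map_eq_zero T).mpr fun y hy => norm_le_zero_iff.mp ?_
    have := h y
    rw [hy, norm_zero] at this
    nlinarith [norm_nonneg y]
  obtain ⟨y, rfl⟩ := (LinearMap.injective_iff_surjective (f := (T : E →ₗ[ℝ] E))).mp hinj v
  change γ * ‖T y‖ ≤ ‖adjoint T (T y)‖
  rcases (norm_nonneg (T y)).eq_or_lt with h0 | hpos
  · rw [← h0, mul_zero]
    exact norm_nonneg _
  have hsq : ‖T y‖ ^ 2 ≤ ‖adjoint T (T y)‖ * ‖y‖ := by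
    rw [← real_inner_self_eq_norm_sq, ← adjoint_inner_left]
    exact real_inner_le_norm _ _
  refine le_of_mul_le_mul_right ?_ hpos
  nlinarith [h y, norm_nonneg (adjoint T (T y))]

theorem EuclideanSpace.adjoint_apply_apply {ι F : Type*} [Fintype ι] [DecidableEq ι]
    [NormedAddCommGroup F] [InnerProductSpace ℝ F] [CompleteSpace F]
    (T : EuclideanSpace ℝ ι →L[ℝ] F) (w : F) (i : ι) :
    adjoint T w i = ⟪T (EuclideanSpace.single i 1), w⟫ := by
  rw [← adjoint_inner_right, EuclideanSpace.inner_single_left, map_one, one_mul]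

theorem projCLM_apply {d D : ℕ} (h : d ≤ D) (x : EuclideanSpace ℝ (Fin D)) (i : Fin d) :
    projCLM d D h x i = x (Fin.castLE h i) := rfl

theorem norm_adjoint_projCLM_apply {d D : ℕ} (h : d ≤ D) (x : EuclideanSpace ℝ (Fin d)) :
    ‖adjoint (projCLM d D h) x‖ = ‖x‖ := by
  refine (norm_map_iff_adjoint_comp_self _).mpr ?_ x
  ext x i
  have hsingle : projCLM d D h (EuclideanSpace.single (Fin.castLE h i) 1) =
      EuclideanSpace.single i 1 := by
    ext j
    simp [projCLM_apply, Fin.castLE_inj]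
  simp [projCLM_apply, EuclideanSpace.adjoint_apply_apply, hsingle,
    EuclideanSpace.inner_single_left]

section Umap

variable {d D : ℕ} (u : EuclideanSpace ℝ (Fin d) → EuclideanSpace ℝ (Fin D))
  (qs : Fin d → EuclideanSpace ℝ (Fin d))

theorem Umap_single (o : EuclideanSpace ℝ (Fin d)) (ℓ : Fin d) :
    Umap u qs o (EuclideanSpace.single ℓ 1) = u o - u (qs ℓ) := by
  simp [Umap]

theorem adjoint_Umap_apply (o : EuclideanSpace ℝ (Fin d)) (w : EuclideanSpace ℝ (Fin D))
    (ℓ : Fin d) : adjoint (Umap u qs o) w ℓ = ⟪u o - u (qs ℓ), w⟫ := by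
  rw [EuclideanSpace.adjoint_apply_apply, Umap_single]

theorem PsiMap_sub_apply (p q : EuclideanSpace ℝ (Fin d)) (ℓ : Fin d) :
    (PsiMap u qs q - PsiMap u qs p) ℓ = ⟪u q - u p, (u q - u (qs ℓ)) + (u p - u (qs ℓ))⟫ := by
  rw [show u q - u p = (u q - u (qs ℓ)) - (u p - u (qs ℓ)) by abel,
    real_inner_sub_add_eq_norm_sq_sub_norm_sq]
  rfl

theorem PsiMap_sub_sub_adjoint_Umap_apply (o p q : EuclideanSpace ℝ (Fin d)) (ℓ : Fin d) :
    (PsiMap u qs q - PsiMap u qs p - (2 : ℝ) • adjoint (Umap u qs o) (u q - u p)) ℓ =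
      ⟪u q - u p, (u q - u o) + (u p - u o)⟫ := by
  have hsplit : (u q - u (qs ℓ)) + (u p - u (qs ℓ)) =
      (u q - u o) + (u p - u o) + (2 : ℝ) • (u o - u (qs ℓ)) := by module
  rw [PiLp.sub_apply, PsiMap_sub_apply, PiLp.smul_apply, adjoint_Umap_apply, hsplit,
    inner_add_right, real_inner_smul_right, real_inner_comm (u o - u (qs ℓ))]
  simp

variable {u qs}

theorem norm_adjoint_Umap_apply_le {o : EuclideanSpace ℝ (Fin d)} {R : ℝ} (hR : 0 ≤ R)
    (hcol : ∀ ℓ, ‖u o - u (qs ℓ)‖ ≤ R) (w : EuclideanSpace ℝ (Fin D)) :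
    ‖adjoint (Umap u qs o) w‖ ≤ √d * (R * ‖w‖) := by
  have hcoord (ℓ : Fin d) : |adjoint (Umap u qs o) w ℓ| ≤ R * ‖w‖ := by
    rw [adjoint_Umap_apply]
    exact (abs_real_inner_le_norm _ _).trans (by gcongr; exact hcol ℓ)
  simpa using EuclideanSpace.norm_le_sqrt_card_mul _ (by positivity) hcoord

theorem norm_PsiMap_sub_le {p q : EuclideanSpace ℝ (Fin d)} {L R : ℝ} (hR : 0 ≤ R)
    (hL : ‖u q - u p‖ ≤ L * ‖q - p‖) (hqR : ∀ ℓ, ‖u q - u (qs ℓ)‖ ≤ R)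
    (hpR : ∀ ℓ, ‖u p - u (qs ℓ)‖ ≤ R) :
    ‖PsiMap u qs q - PsiMap u qs p‖ ≤ √d * (L * ‖q - p‖ * (2 * R)) := by
  have hL0 : 0 ≤ L * ‖q - p‖ := (norm_nonneg _).trans hL
  have hcoord (ℓ : Fin d) : |(PsiMap u qs q - PsiMap u qs p) ℓ| ≤ L * ‖q - p‖ * (2 * R) := by
    rw [PsiMap_sub_apply]
    refine (abs_real_inner_le_norm _ _).trans (mul_le_mul hL ?_ (norm_nonneg _) hL0)
    exact (norm_add_le _ _).trans (by linarith [hqR ℓ, hpR ℓ])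
  simpa using EuclideanSpace.norm_le_sqrt_card_mul _ (by positivity) hcoord

theorem two_mul_le_norm_PsiMap_sub_add
    (A : EuclideanSpace ℝ (Fin d) →L[ℝ] EuclideanSpace ℝ (Fin D))
    {o p q : EuclideanSpace ℝ (Fin d)} {γ ε L R S : ℝ} (hR : 0 ≤ R)
    (hγ : ∀ y, γ * ‖y‖ ≤ ‖adjoint (Umap u qs o) (A y)‖) (hcol : ∀ ℓ, ‖u o - u (qs ℓ)‖ ≤ R)
    (herr : ‖u q - u p - A (q - p)‖ ≤ ε * ‖q - p‖) (hL : ‖u q - u p‖ ≤ L * ‖q - p‖)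
    (hS : ‖(u q - u o) + (u p - u o)‖ ≤ S) :
    2 * γ * ‖q - p‖ ≤
      ‖PsiMap u qs q - PsiMap u qs p‖ + √d * (2 * R * ε + L * S) * ‖q - p‖ := by
  set T := adjoint (Umap u qs o)
  have hL0 : 0 ≤ L * ‖q - p‖ := (norm_nonneg _).trans hL
  have hS0 : 0 ≤ S := (norm_nonneg _).trans hS
  have hlin : γ * ‖q - p‖ ≤ ‖T (u q - u p)‖ + ‖T (u q - u p - A (q - p))‖ :=
    calc γ * ‖q - p‖ ≤ ‖T (A (q - p))‖ := hγ (q - p)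
      _ = ‖T (u q - u p) - T (u q - u p - A (q - p))‖ := by rw [← map_sub, sub_sub_cancel]
      _ ≤ _ := norm_sub_le _ _
  have herr' : ‖T (u q - u p - A (q - p))‖ ≤ √d * (R * (ε * ‖q - p‖)) :=
    (norm_adjoint_Umap_apply_le hR hcol _).trans (by gcongr)
  have hquad : ‖PsiMap u qs q - PsiMap u qs p - (2 : ℝ) • T (u q - u p)‖ ≤
      √d * (L * ‖q - p‖ * S) := by
    have hcoord (ℓ : Fin d) :
        |(PsiMap u qs q - PsiMap u qs p - (2 : ℝ) • T (u q - u p)) ℓ| ≤ L * ‖q - p‖ * S := by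
      rw [PsiMap_sub_sub_adjoint_Umap_apply]
      exact (abs_real_inner_le_norm _ _).trans (mul_le_mul hL hS (norm_nonneg _) hL0)
    simpa using EuclideanSpace.norm_le_sqrt_card_mul _ (by positivity) hcoord
  have htwo : 2 * ‖T (u q - u p)‖ ≤ ‖PsiMap u qs q - PsiMap u qs p‖ +
      ‖PsiMap u qs q - PsiMap u qs p - (2 : ℝ) • T (u q - u p)‖ := by
    simpa [norm_smul] using norm_le_norm_add_norm_sub (PsiMap u qs q - PsiMap u qs p)
      ((2 : ℝ) • T (u q - u p))
  linear_combination 2 * hlin + 2 * herr' + hquad + htwo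

end Umap

section MeanValue

variable {E F : Type*} [NormedAddCommGroup E] [NormedSpace ℝ E] [NormedAddCommGroup F]
  [NormedSpace ℝ F] {f : E → F} {f' : E → E →L[ℝ] F} {δ κ ρ : ℝ} {p q : E}

theorem norm_image_sub_sub_fderiv_zero_le
    (hf : ∀ x ∈ closedBall 0 δ, HasFDerivWithinAt f (f' x) (closedBall 0 δ) x)
    (hf' : ∀ x ∈ closedBall 0 δ, ‖f' x - f' 0‖ ≤ κ * ‖x‖) (hκ : 0 ≤ κ) (hρ : ρ ≤ δ)
    (hp : p ∈ closedBall 0 ρ) (hq : q ∈ closedBall 0 ρ) :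
    ‖f q - f p - f' 0 (q - p)‖ ≤ κ * ρ * ‖q - p‖ := by
  have hsub := closedBall_subset_closedBall (x := (0 : E)) hρ
  refine Convex.norm_image_sub_le_of_norm_hasFDerivWithin_le'
    (fun x hx => (hf x (hsub hx)).mono hsub) (fun x hx => ?_) (convex_closedBall 0 ρ) hp hq
  exact (hf' x (hsub hx)).trans (by gcongr; exact mem_closedBall_zero_iff.mp hx)

theorem norm_image_sub_le_one_add_mul
    (hf : ∀ x ∈ closedBall 0 δ, HasFDerivWithinAt f (f' x) (closedBall 0 δ) x)
    (hf' : ∀ x ∈ closedBall 0 δ, ‖f' x - f' 0‖ ≤ κ * ‖x‖) (hκ : 0 ≤ κ)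
    (hA : ∀ v, ‖f' 0 v‖ = ‖v‖) (hρ : ρ ≤ δ) (hp : p ∈ closedBall 0 ρ)
    (hq : q ∈ closedBall 0 ρ) : ‖f q - f p‖ ≤ (1 + κ * ρ) * ‖q - p‖ :=
  calc ‖f q - f p‖ ≤ ‖f' 0 (q - p)‖ + ‖f q - f p - f' 0 (q - p)‖ := norm_le_insert' _ _
    _ ≤ ‖q - p‖ + κ * ρ * ‖q - p‖ := by
      rw [hA]
      gcongr
      exact norm_image_sub_sub_fderiv_zero_le hf hf' hκ hρ hp hq
    _ = (1 + κ * ρ) * ‖q - p‖ := by ring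

end MeanValue

section Stability

variable {d D : ℕ} {u : EuclideanSpace ℝ (Fin d) → EuclideanSpace ℝ (Fin D)}
  {qs : Fin d → EuclideanSpace ℝ (Fin d)}
  {f' : EuclideanSpace ℝ (Fin d) → EuclideanSpace ℝ (Fin d) →L[ℝ] EuclideanSpace ℝ (Fin D)}
  {δ κ η : ℝ} {p q : EuclideanSpace ℝ (Fin d)}
  (hu : ∀ x ∈ closedBall 0 δ, HasFDerivWithinAt u (f' x) (closedBall 0 δ) x)
  (hf' : ∀ x ∈ closedBall 0 δ, ‖f' x - f' 0‖ ≤ κ * ‖x‖) (hκ : 0 ≤ κ)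
  (hA : ∀ v, ‖f' 0 v‖ = ‖v‖) (hη : η ≤ δ) (hκη : κ * η ≤ 1 / 2)
include hu hf' hκ hA hη hκη

theorem norm_image_sub_le_three_halves_mul {x y : EuclideanSpace ℝ (Fin d)}
    (hx : x ∈ closedBall 0 η) (hy : y ∈ closedBall 0 η) :
    ‖u y - u x‖ ≤ 3 / 2 * ‖y - x‖ :=
  (norm_image_sub_le_one_add_mul hu hf' hκ hA hη hx hy).trans
    (mul_le_mul_of_nonneg_right (by linarith) (norm_nonneg _))

theorem norm_image_sub_le_three_halves_mul_add {x y : EuclideanSpace ℝ (Fin d)}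
    (hx : x ∈ closedBall 0 η) (hy : y ∈ closedBall 0 η) :
    ‖u y - u x‖ ≤ 3 / 2 * (‖y‖ + ‖x‖) :=
  (norm_image_sub_le_three_halves_mul hu hf' hκ hA hη hκη hx hy).trans (by
    gcongr; exact norm_sub_le _ _)

theorem norm_PsiMap_sub_le_of_mem_closedBall (hqs : ∀ ℓ, qs ℓ ∈ closedBall 0 η)
    (hp : p ∈ closedBall 0 η) (hq : q ∈ closedBall 0 η) :
    ‖PsiMap u qs q - PsiMap u qs p‖ ≤ 9 * √d * η * ‖q - p‖ := by
  have hη0 : 0 ≤ η := (norm_nonneg p).trans (mem_closedBall_zero_iff.mp hp)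
  have hcol {x : EuclideanSpace ℝ (Fin d)} (hx : x ∈ closedBall 0 η) (ℓ : Fin d) :
      ‖u x - u (qs ℓ)‖ ≤ 3 * η := by
    have := norm_image_sub_le_three_halves_mul_add hu hf' hκ hA hη hκη (hqs ℓ) hx
    linarith [mem_closedBall_zero_iff.mp hx, mem_closedBall_zero_iff.mp (hqs ℓ)]
  have := norm_PsiMap_sub_le (by positivity)
    (norm_image_sub_le_three_halves_mul hu hf' hκ hA hη hκη hp hq) (hcol hq) (hcol hp)
  linarith

theorem le_norm_PsiMap_sub_of_mem_closedBall {γ r : ℝ}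
    (hγ : ∀ y, γ * ‖y‖ ≤ ‖adjoint (Umap u qs 0) (f' 0 y)‖) (hqs : ∀ ℓ, qs ℓ ∈ closedBall 0 η)
    (hr : r ≤ η) (hrγ : r * √d ≤ γ / 8) (hp : p ∈ closedBall 0 r) (hq : q ∈ closedBall 0 r) :
    γ * ‖q - p‖ ≤ ‖PsiMap u qs q - PsiMap u qs p‖ := by
  have hpr := mem_closedBall_zero_iff.mp hp
  have hqr := mem_closedBall_zero_iff.mp hq
  have hr0 : 0 ≤ r := (norm_nonneg p).trans hpr
  have hball := closedBall_subset_closedBall (x := (0 : EuclideanSpace ℝ (Fin d))) hr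
  have hlip {x y : EuclideanSpace ℝ (Fin d)} (hx : x ∈ closedBall 0 η) (hy : y ∈ closedBall 0 η) :=
    norm_image_sub_le_three_halves_mul_add hu hf' hκ hA hη hκη hx hy
  have h0 : (0 : EuclideanSpace ℝ (Fin d)) ∈ closedBall 0 η := mem_closedBall_self (hr0.trans hr)
  have hcol (ℓ : Fin d) : ‖u 0 - u (qs ℓ)‖ ≤ 3 / 2 * η := by
    have := hlip (hqs ℓ) h0
    rw [norm_zero, zero_add] at this
    linarith [mem_closedBall_zero_iff.mp (hqs ℓ)]
  have hS : ‖(u q - u 0) + (u p - u 0)‖ ≤ 3 * r := by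
    refine (norm_add_le _ _).trans ?_
    linarith [hlip h0 (hball hq), hlip h0 (hball hp), norm_zero (E := EuclideanSpace ℝ (Fin d))]
  have hmain := two_mul_le_norm_PsiMap_sub_add (f' 0) (by linarith) hγ hcol
    (norm_image_sub_sub_fderiv_zero_le hu hf' hκ (hr.trans hη) hp hq)
    (norm_image_sub_le_three_halves_mul hu hf' hκ hA hη hκη (hball hp) (hball hq)) hS
  have hconst : √d * (2 * (3 / 2 * η) * (κ * r) + 3 / 2 * (3 * r)) ≤ 3 / 4 * γ := by
    have : κ * η * (r * √d) ≤ 1 / 2 * (r * √d) := by gcongr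
    nlinarith
  have hγ0 : 0 ≤ γ := by linarith [mul_nonneg hr0 (Real.sqrt_nonneg d)]
  nlinarith [mul_le_mul_of_nonneg_right hconst (norm_nonneg (q - p)),
    mul_nonneg hγ0 (norm_nonneg (q - p))]

end Stability

theorem statement7_general (d D : ℕ) (hdD : d ≤ D)
    (u : EuclideanSpace ℝ (Fin d) → EuclideanSpace ℝ (Fin D))
    (δ κ : ℝ) (hκ : 0 < κ)
    (J : EuclideanSpace ℝ (Fin d) → (EuclideanSpace ℝ (Fin D) →L[ℝ] EuclideanSpace ℝ (Fin d)))
    (hu : ∀ q ∈ closedBall (0 : EuclideanSpace ℝ (Fin d)) δ,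
      HasFDerivWithinAt u (ContinuousLinearMap.adjoint (J q)) (closedBall 0 δ) q)
    (hJ0 : J 0 = projCLM d D hdD)
    (hJlip : ∀ q ∈ closedBall (0 : EuclideanSpace ℝ (Fin d)) δ, ‖J q - J 0‖ ≤ κ * ‖q‖)
    (qs : Fin d → EuclideanSpace ℝ (Fin d))
    (hqs : ∀ ℓ, qs ℓ ∈ closedBall (0 : EuclideanSpace ℝ (Fin d)) (min δ (1 / (2 * κ))))
    (γ : ℝ) (hγpos : 0 < γ)
    (hγ : ∀ y : EuclideanSpace ℝ (Fin d), ‖y‖ = 1 → γ ≤ ‖(J 0) ((Umap u qs 0) y)‖) :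
    Set.InjOn (PsiMap u qs)
      (closedBall (0 : EuclideanSpace ℝ (Fin d))
        (2 * ((1 / 2) * min (1 / (2 * κ)) (min δ (γ / (8 * Real.sqrt d)))))) ∧
    ∀ p ∈ closedBall (0 : EuclideanSpace ℝ (Fin d))
        (2 * ((1 / 2) * min (1 / (2 * κ)) (min δ (γ / (8 * Real.sqrt d))))),
      ∀ q ∈ closedBall (0 : EuclideanSpace ℝ (Fin d))
          (2 * ((1 / 2) * min (1 / (2 * κ)) (min δ (γ / (8 * Real.sqrt d))))),
        γ * ‖q - p‖ ≤ ‖PsiMap u qs q - PsiMap u qs p‖ ∧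
        ‖PsiMap u qs q - PsiMap u qs p‖ ≤
          16 * Real.sqrt d * min δ (1 / (2 * κ)) * ‖q - p‖ := by
  set η := min δ (1 / (2 * κ))
  set r := 2 * ((1 / 2) * min (1 / (2 * κ)) (min δ (γ / (8 * Real.sqrt d))))
  have hr : r = min (1 / (2 * κ)) (min δ (γ / (8 * √d))) := by ring
  have hrη : r ≤ η := hr ▸ le_min ((min_le_right _ _).trans (min_le_left _ _)) (min_le_left _ _)
  have hκη : κ * η ≤ 1 / 2 :=
    (mul_le_mul_of_nonneg_left (min_le_right _ _) hκ.le).trans_eq (by field_simp)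
  have hrγ : r * √d ≤ γ / 8 := mul_le_of_le_div₀ (by positivity) (Real.sqrt_nonneg _)
    (div_div γ 8 √d ▸ hr ▸ (min_le_right _ _).trans (min_le_right _ _))
  have hA (v : EuclideanSpace ℝ (Fin d)) : ‖adjoint (J 0) v‖ = ‖v‖ := by
    rw [hJ0, norm_adjoint_projCLM_apply]
  have hf' (x) (hx : x ∈ closedBall (0 : EuclideanSpace ℝ (Fin d)) δ) :
      ‖adjoint (J x) - adjoint (J 0)‖ ≤ κ * ‖x‖ := by
    rw [← map_sub, LinearIsometryEquiv.norm_map]; exact hJlip x hx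
  have hγ' (y : EuclideanSpace ℝ (Fin d)) :
      γ * ‖y‖ ≤ ‖adjoint (Umap u qs 0) (adjoint (J 0) y)‖ := by
    rw [← comp_apply, ← adjoint_comp]
    have hlow := le_norm_apply_of_forall_norm_eq_one ((J 0).comp (Umap u qs 0)) hγ
    exact le_norm_adjoint_apply _ hγpos hlow y
  have hest (p) (hp : p ∈ closedBall (0 : EuclideanSpace ℝ (Fin d)) r) (q)
      (hq : q ∈ closedBall (0 : EuclideanSpace ℝ (Fin d)) r) :
      γ * ‖q - p‖ ≤ ‖PsiMap u qs q - PsiMap u qs p‖ ∧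
        ‖PsiMap u qs q - PsiMap u qs p‖ ≤ 16 * √d * η * ‖q - p‖ := by
    have hball := closedBall_subset_closedBall (x := (0 : EuclideanSpace ℝ (Fin d))) hrη
    have hη0 : 0 ≤ η := (norm_nonneg p).trans ((mem_closedBall_zero_iff.mp hp).trans hrη)
    refine ⟨le_norm_PsiMap_sub_of_mem_closedBall hu hf' hκ.le hA (min_le_left _ _) hκη hγ' hqs
      hrη hrγ hp hq, ?_⟩
    refine (norm_PsiMap_sub_le_of_mem_closedBall hu hf' hκ.le hA (min_le_left _ _) hκη hqs
      (hball hp) (hball hq)).trans ?_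
    gcongr
    norm_num
  refine ⟨fun p hp q hq hpq => ?_, hest⟩
  have := (hest p hp q hq).1
  rw [hpq, sub_self, norm_zero] at this
  exact (sub_eq_zero.mp (norm_le_zero_iff.mp (nonpos_of_mul_nonpos_right this hγpos))).symm

/-- with `β* = (1/2)·min(1/(2κ), δ*, γ/(8√d))` and `η* = min(δ*, 1/(2κ))`,
`Ψ` is injective on `B_d(0, 2β*)` and for all `p, q ∈ B_d(0, 2β*)`,
`γ‖q − p‖ ≤ ‖Ψ(q) − Ψ(p)‖ ≤ 16√d·η*·‖q − p‖`. -/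
theorem statement7 (d D : ℕ) (hd : 1 ≤ d) (hdD : d ≤ D)
    (u : EuclideanSpace ℝ (Fin d) → EuclideanSpace ℝ (Fin D))
    (δ κ : ℝ) (hδ : 0 < δ) (hκ : 0 < κ)
    (J : EuclideanSpace ℝ (Fin d) → (EuclideanSpace ℝ (Fin D) →L[ℝ] EuclideanSpace ℝ (Fin d)))
    (hu : ∀ q ∈ closedBall (0 : EuclideanSpace ℝ (Fin d)) δ,
      HasFDerivWithinAt u (ContinuousLinearMap.adjoint (J q)) (closedBall 0 δ) q)
    (hJcont : ContinuousOn J (closedBall 0 δ))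
    (hJ0 : J 0 = projCLM d D hdD)
    (hJlip : ∀ q ∈ closedBall (0 : EuclideanSpace ℝ (Fin d)) δ, ‖J q - J 0‖ ≤ κ * ‖q‖)
    (qs : Fin d → EuclideanSpace ℝ (Fin d))
    (hqs : ∀ ℓ, qs ℓ ∈ closedBall (0 : EuclideanSpace ℝ (Fin d)) (min δ (1 / (2 * κ))))
    (γ : ℝ) (hγpos : 0 < γ)
    (hγ : ∀ y : EuclideanSpace ℝ (Fin d), ‖y‖ = 1 → γ ≤ ‖(J 0) ((Umap u qs 0) y)‖) :
    Set.InjOn (PsiMap u qs)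
      (closedBall (0 : EuclideanSpace ℝ (Fin d))
        (2 * ((1 / 2) * min (1 / (2 * κ)) (min δ (γ / (8 * Real.sqrt d)))))) ∧
    ∀ p ∈ closedBall (0 : EuclideanSpace ℝ (Fin d))
        (2 * ((1 / 2) * min (1 / (2 * κ)) (min δ (γ / (8 * Real.sqrt d))))),
      ∀ q ∈ closedBall (0 : EuclideanSpace ℝ (Fin d))
          (2 * ((1 / 2) * min (1 / (2 * κ)) (min δ (γ / (8 * Real.sqrt d))))),
        γ * ‖q - p‖ ≤ ‖PsiMap u qs q - PsiMap u qs p‖ ∧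
        ‖PsiMap u qs q - PsiMap u qs p‖ ≤
          16 * Real.sqrt d * min δ (1 / (2 * κ)) * ‖q - p‖ :=
  statement7_general d D hdD u δ κ hκ J hu hJ0 hJlip qs hqs γ hγpos hγ
end
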